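/- arXiv:1003.0462 — 6 statements merged into one kernel-verified Lean document; each statement's English description precedes it below -/
import Mathlib

section
/- Let c₁, c₂ be positive integers, n a nonzero integer, x, y integers with gcd(x,c₁)=1, gcd(y,c₂)=1 and c₂x + c₁y = n. Let x̄, ȳ be inverses of x mod c₁ and y mod c₂ respectively, and set r₁ = (n·x̄ - c₂)/c₁ and r₂ = (n·ȳ - c₁)/c₂ (both integers). Then r₁·r₂ ≡ 1 (mod n). -/
/-! Write `x x̄ = 1 + c₁ k` and `y ȳ = 1 + c₂ m`. Expanding `(n x̄ - c₂)(n ȳ - c₁)` and using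
`n = c₂ x + c₁ y` on the `n² x̄ ȳ` term gives `c₁ c₂ r₁ r₂ = c₁ c₂ (1 + n (k ȳ + m x̄))`,
so after cancelling `c₁ c₂` the product `r₁ r₂` is `1` plus an explicit multiple of `n`. -/

theorem mul_mul_mul_eq_of_inverse_quotients {R : Type*} [CommRing R]
    {a b n x y u v k m r s : R} (h : b * x + a * y = n)
    (hu : x * u = 1 + a * k) (hv : y * v = 1 + b * m)
    (hr : a * r = n * u - b) (hs : b * s = n * v - a) :
    a * b * (r * s) = a * b * (1 + n * (k * v + m * u)) := by
  have hrs : (a * r) * (b * s) = (n * u - b) * (n * v - a) := by rw [hr, hs]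
  linear_combination hrs + n * b * v * hu + n * a * u * hv - n * u * v * h

theorem mul_eq_one_add_mul_of_inverse_quotients {R : Type*} [CommRing R] [IsDomain R]
    {a b n x y u v k m r s : R} (ha : a ≠ 0) (hb : b ≠ 0) (h : b * x + a * y = n)
    (hu : x * u = 1 + a * k) (hv : y * v = 1 + b * m)
    (hr : a * r = n * u - b) (hs : b * s = n * v - a) :
    r * s = 1 + n * (k * v + m * u) :=
  mul_left_cancel₀ (mul_ne_zero ha hb) (mul_mul_mul_eq_of_inverse_quotients h hu hv hr hs)

theorem stmt_2_general (c₁ c₂ : ℕ) (hc₁ : 0 < c₁) (hc₂ : 0 < c₂) (n : ℤ)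
    (x y xbar ybar r₁ r₂ : ℤ)
    (h : (c₂ : ℤ) * x + (c₁ : ℤ) * y = n)
    (hxbar : x * xbar ≡ 1 [ZMOD (c₁ : ℤ)])
    (hybar : y * ybar ≡ 1 [ZMOD (c₂ : ℤ)])
    (hr₁ : (c₁ : ℤ) * r₁ = n * xbar - c₂)
    (hr₂ : (c₂ : ℤ) * r₂ = n * ybar - c₁) :
    r₁ * r₂ ≡ 1 [ZMOD n] := by
  obtain ⟨k, hk⟩ := Int.modEq_iff_add_fac.mp hxbar.symm
  obtain ⟨m, hm⟩ := Int.modEq_iff_add_fac.mp hybar.symm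
  have hrr := mul_eq_one_add_mul_of_inverse_quotients
    (by positivity) (by positivity) h hk hm hr₁ hr₂
  exact (Int.modEq_iff_add_fac.mpr ⟨_, hrr⟩).symm

theorem stmt_2 (c₁ c₂ : ℕ) (hc₁ : 0 < c₁) (hc₂ : 0 < c₂) (n : ℤ) (hn : n ≠ 0)
    (x y xbar ybar r₁ r₂ : ℤ)
    (hx : IsCoprime x (c₁ : ℤ)) (hy : IsCoprime y (c₂ : ℤ))
    (h : (c₂ : ℤ) * x + (c₁ : ℤ) * y = n)
    (hxbar : x * xbar ≡ 1 [ZMOD (c₁ : ℤ)])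
    (hybar : y * ybar ≡ 1 [ZMOD (c₂ : ℤ)])
    (hr₁ : (c₁ : ℤ) * r₁ = n * xbar - c₂)
    (hr₂ : (c₂ : ℤ) * r₂ = n * ybar - c₁) :
    r₁ * r₂ ≡ 1 [ZMOD n] :=
  stmt_2_general c₁ c₂ hc₁ hc₂ n x y xbar ybar r₁ r₂ h hxbar hybar hr₁ hr₂
end

section
/- Let c₁, c₂ be positive integers with d = gcd(c₁,c₂) dividing the nonzero integer n. Suppose (x,y) and (x',y') are two pairs with gcd(x,c₁)=gcd(x',c₁)=1, gcd(y,c₂)=gcd(y',c₂)=1, c₂x + c₁y = n = c₂x' + c₁y', and both pairs give rise to the same residues r₁ mod n (via r₁ = (n·x̄ - c₂)/c₁) and r₂ mod n (via r₂ = (n·ȳ - c₁)/c₂). Then x ≡ x' (mod c₁) and y ≡ y' (mod c₂). -/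
/-!
Subtracting the defining equations gives `c₁ (r₁ - r₁') = n (x̄ - x̄')`; since `n ∣ r₁ - r₁'`,
cancelling `n` yields `x̄ ≡ x̄' (mod c₁)`, and an element is determined modulo `c₁` by its inverse.
The same argument applies to `y` modulo `c₂`.
-/

theorem dvd_of_mul_eq_mul_of_dvd {M : Type*} [CommMonoidWithZero M] [IsCancelMulZero M]
    {c n s t : M} (hn : n ≠ 0) (h : c * s = n * t) (hs : n ∣ s) : c ∣ t := by
  obtain ⟨k, rfl⟩ := hs
  refine ⟨k, mul_left_cancel₀ hn ?_⟩
  rw [← h, mul_left_comm]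

namespace Int

theorem ModEq.of_mul_modEq_one {c x x' b : ℤ} (h : x * b ≡ 1 [ZMOD c])
    (h' : x' * b ≡ 1 [ZMOD c]) : x ≡ x' [ZMOD c] :=
  calc x = x * 1 := (mul_one x).symm
    _ ≡ x * (x' * b) [ZMOD c] := h'.symm.mul_left x
    _ = x' * (x * b) := by ring
    _ ≡ x' * 1 [ZMOD c] := h.mul_left x'
    _ = x' := mul_one x'

theorem modEq_of_mul_sub_modEq {c n e b b' r r' : ℤ} (hn : n ≠ 0)
    (hr : c * r = n * b - e) (hr' : c * r' = n * b' - e) (hrr' : r ≡ r' [ZMOD n]) :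
    b ≡ b' [ZMOD c] :=
  modEq_iff_dvd.mpr <| dvd_of_mul_eq_mul_of_dvd hn (by linear_combination hr' - hr)
    (modEq_iff_dvd.mp hrr')

theorem modEq_of_inverse_mul_sub_modEq {c n e x x' b b' r r' : ℤ} (hn : n ≠ 0)
    (hb : x * b ≡ 1 [ZMOD c]) (hb' : x' * b' ≡ 1 [ZMOD c])
    (hr : c * r = n * b - e) (hr' : c * r' = n * b' - e) (hrr' : r ≡ r' [ZMOD n]) :
    x ≡ x' [ZMOD c] :=
  hb.of_mul_modEq_one <| ((modEq_of_mul_sub_modEq hn hr hr' hrr').mul_left x').trans hb'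

end Int

theorem stmt_4_general (c₁ c₂ : ℕ) (n : ℤ) (hn : n ≠ 0)
    (x y x' y' xbar ybar xbar' ybar' r₁ r₂ r₁' r₂' : ℤ)
    (hxbar : x * xbar ≡ 1 [ZMOD (c₁ : ℤ)])
    (hybar : y * ybar ≡ 1 [ZMOD (c₂ : ℤ)])
    (hxbar' : x' * xbar' ≡ 1 [ZMOD (c₁ : ℤ)])
    (hybar' : y' * ybar' ≡ 1 [ZMOD (c₂ : ℤ)])
    (hr₁ : (c₁ : ℤ) * r₁ = n * xbar - c₂)
    (hr₂ : (c₂ : ℤ) * r₂ = n * ybar - c₁)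
    (hr₁' : (c₁ : ℤ) * r₁' = n * xbar' - c₂)
    (hr₂' : (c₂ : ℤ) * r₂' = n * ybar' - c₁)
    (hsame₁ : r₁ ≡ r₁' [ZMOD n]) (hsame₂ : r₂ ≡ r₂' [ZMOD n]) :
    x ≡ x' [ZMOD (c₁ : ℤ)] ∧ y ≡ y' [ZMOD (c₂ : ℤ)] :=
  ⟨Int.modEq_of_inverse_mul_sub_modEq hn hxbar hxbar' hr₁ hr₁' hsame₁,
    Int.modEq_of_inverse_mul_sub_modEq hn hybar hybar' hr₂ hr₂' hsame₂⟩

theorem stmt_4 (c₁ c₂ : ℕ) (hc₁ : 0 < c₁) (hc₂ : 0 < c₂) (n : ℤ) (hn : n ≠ 0)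
    (hd : ((Nat.gcd c₁ c₂ : ℕ) : ℤ) ∣ n)
    (x y x' y' xbar ybar xbar' ybar' r₁ r₂ r₁' r₂' : ℤ)
    (hx : IsCoprime x (c₁ : ℤ)) (hy : IsCoprime y (c₂ : ℤ))
    (hx' : IsCoprime x' (c₁ : ℤ)) (hy' : IsCoprime y' (c₂ : ℤ))
    (h : (c₂ : ℤ) * x + (c₁ : ℤ) * y = n)
    (h' : (c₂ : ℤ) * x' + (c₁ : ℤ) * y' = n)
    (hxbar : x * xbar ≡ 1 [ZMOD (c₁ : ℤ)])
    (hybar : y * ybar ≡ 1 [ZMOD (c₂ : ℤ)])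
    (hxbar' : x' * xbar' ≡ 1 [ZMOD (c₁ : ℤ)])
    (hybar' : y' * ybar' ≡ 1 [ZMOD (c₂ : ℤ)])
    (hr₁ : (c₁ : ℤ) * r₁ = n * xbar - c₂)
    (hr₂ : (c₂ : ℤ) * r₂ = n * ybar - c₁)
    (hr₁' : (c₁ : ℤ) * r₁' = n * xbar' - c₂)
    (hr₂' : (c₂ : ℤ) * r₂' = n * ybar' - c₁)
    (hsame₁ : r₁ ≡ r₁' [ZMOD n]) (hsame₂ : r₂ ≡ r₂' [ZMOD n]) :
    x ≡ x' [ZMOD (c₁ : ℤ)] ∧ y ≡ y' [ZMOD (c₂ : ℤ)] :=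
  stmt_4_general c₁ c₂ n hn x y x' y' xbar ybar xbar' ybar' r₁ r₂ r₁' r₂' hxbar hybar hxbar' hybar'
    hr₁ hr₂ hr₁' hr₂' hsame₁ hsame₂
end

section
/- Let c₁, c₂ be positive integers, n a nonzero integer with d = gcd(c₁,c₂) dividing n. Let r be an integer coprime to n such that (c₁/d)·r + (c₂/d) ≡ 0 (mod n/d) and (c₁/d)·r + (c₂/d) ≢ 0 (mod n/d') for every proper divisor d' of d. Then ξ := (c₂ + c₁·r)/n is an integer which is a unit modulo c₁. -/
/-!
Write `c₁ = d a`, `c₂ = d b` with `a, b` coprime and `n = d m`. The first congruence gives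
`a r + b = m ξ`, so `c₂ + c₁ r = n ξ`. A prime dividing both `ξ` and `a` would divide `b`, and a
prime `p` dividing both `ξ` and `d` would give `p m ∣ a r + b`, i.e. the first congruence would
already hold modulo `n / (d / p)`, against the minimality of `d`.
-/

theorem isCoprime_mul_of_add_eq_mul {a b r m ξ : ℤ} {d : ℕ} (hab : IsCoprime a b)
    (hξ : a * r + b = m * ξ) (hd : ∀ p : ℕ, p.Prime → p ∣ d → ¬ (p * m : ℤ) ∣ a * r + b) :
    IsCoprime ξ (d * a) := by
  refine IsCoprime.mul_right ?_ ?_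
  · rw [Int.isCoprime_iff_nat_coprime, Int.natAbs_natCast]
    refine Nat.coprime_of_dvd fun p hp hpξ hpd => hd p hp hpd ?_
    rw [hξ, mul_comm (p : ℤ)]
    exact mul_dvd_mul_left m (Int.natCast_dvd.mpr hpξ)
  · have hamξ : IsCoprime a (m * ξ) := by
      rw [← hξ, add_comm]
      exact hab.add_mul_left_right r
    exact hamξ.of_mul_right_right.symm

theorem not_prime_mul_ediv_dvd {n x : ℤ} {d p : ℕ} (hd : 0 < d) (hdn : (d : ℤ) ∣ n)
    (hmin : ∀ d' : ℕ, d' ∣ d → d' < d → ¬ n / d' ∣ x) (hp : p.Prime) (hpd : p ∣ d) :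
    ¬ (p * (n / d) : ℤ) ∣ x := by
  obtain ⟨d', rfl⟩ := hpd
  have hd' : 0 < d' := Nat.pos_of_mul_pos_left hd
  obtain ⟨m, rfl⟩ := hdn
  convert hmin d' (dvd_mul_left d' p) (lt_mul_left hd' hp.one_lt) using 2
  rw [Int.mul_ediv_cancel_left _ (by positivity), Nat.cast_mul,
    show (p : ℤ) * d' * m = d' * (p * m) by ring, Int.mul_ediv_cancel_left _ (by positivity)]

theorem stmt_5_general (c₁ c₂ : ℕ) (hc₁ : 0 < c₁) (n : ℤ)
    (d : ℕ) (hdef : d = Nat.gcd c₁ c₂) (hd : (d : ℤ) ∣ n)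
    (r : ℤ)
    (h1 : (n / (d : ℤ)) ∣ ((c₁ / d : ℕ) : ℤ) * r + ((c₂ / d : ℕ) : ℤ))
    (h2 : ∀ d' : ℕ, d' ∣ d → d' < d →
      ¬ ((n / (d' : ℤ)) ∣ ((c₁ / d : ℕ) : ℤ) * r + ((c₂ / d : ℕ) : ℤ))) :
    n ∣ (c₂ : ℤ) + (c₁ : ℤ) * r ∧ IsCoprime (((c₂ : ℤ) + (c₁ : ℤ) * r) / n) (c₁ : ℤ) := by
  have hd0 : 0 < d := hdef ▸ Nat.gcd_pos_of_pos_left c₂ hc₁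
  have hab : IsCoprime ((c₁ / d : ℕ) : ℤ) ((c₂ / d : ℕ) : ℤ) :=
    Nat.isCoprime_iff_coprime.mpr (hdef ▸ Nat.coprime_div_gcd_div_gcd (hdef ▸ hd0))
  have hc₁d : (c₁ : ℤ) = d * (c₁ / d : ℕ) := by
    exact_mod_cast (Nat.mul_div_cancel' (hdef ▸ Nat.gcd_dvd_left c₁ c₂)).symm
  have hc₂d : (c₂ : ℤ) = d * (c₂ / d : ℕ) := by
    exact_mod_cast (Nat.mul_div_cancel' (hdef ▸ Nat.gcd_dvd_right c₁ c₂)).symm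
  have hsum : (c₂ : ℤ) + c₁ * r = d * ((c₁ / d : ℕ) * r + (c₂ / d : ℕ)) := by
    rw [hc₁d, hc₂d]; ring
  have hn : (d : ℤ) * (n / d) = n := Int.mul_ediv_cancel' hd
  have hdvd : n ∣ (c₂ : ℤ) + c₁ * r := by
    rw [hsum, ← hn]
    exact mul_dvd_mul_left _ h1
  have hξ : ((c₁ / d : ℕ) : ℤ) * r + (c₂ / d : ℕ) = n / d * ((c₂ + c₁ * r) / n) := by
    refine mul_left_cancel₀ (Int.natCast_ne_zero.mpr hd0.ne') ?_
    rw [← hsum, ← mul_assoc, hn, Int.mul_ediv_cancel' hdvd]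
  have hcop := isCoprime_mul_of_add_eq_mul hab hξ fun p hp hpd =>
    not_prime_mul_ediv_dvd hd0 hd h2 hp hpd
  exact ⟨hdvd, hc₁d ▸ hcop⟩

theorem stmt_5 (c₁ c₂ : ℕ) (hc₁ : 0 < c₁) (hc₂ : 0 < c₂) (n : ℤ) (hn : n ≠ 0)
    (d : ℕ) (hdef : d = Nat.gcd c₁ c₂) (hd : (d : ℤ) ∣ n)
    (r : ℤ) (hr : IsCoprime r n)
    (h1 : (n / (d : ℤ)) ∣ ((c₁ / d : ℕ) : ℤ) * r + ((c₂ / d : ℕ) : ℤ))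
    (h2 : ∀ d' : ℕ, d' ∣ d → d' < d →
      ¬ ((n / (d' : ℤ)) ∣ ((c₁ / d : ℕ) : ℤ) * r + ((c₂ / d : ℕ) : ℤ))) :
    n ∣ (c₂ : ℤ) + (c₁ : ℤ) * r ∧ IsCoprime (((c₂ : ℤ) + (c₁ : ℤ) * r) / n) (c₁ : ℤ) :=
  stmt_5_general c₁ c₂ hc₁ n d hdef hd r h1 h2
end

section
/- Let c₁, c₂ be positive integers, n a nonzero integer with d = gcd(c₁,c₂) dividing n. The map sending an equivalence class of pairs (x,y) (with gcd(x,c₁)=1, gcd(y,c₂)=1, c₂x + c₁y = n, modulo x ≡ x' mod c₁ and y ≡ y' mod c₂) to r₁ mod n, where r₁ = (n·x̄ - c₂)/c₁ for x̄ an inverse of x mod c₁, is a bijection onto the set Y(c₁,c₂,n) of classes r ∈ (ℤ/n)^× satisfying (c₁/d)r + (c₂/d) ≡ 0 (mod n/d) and (c₁/d)r + (c₂/d) ≢ 0 (mod n/d') for every proper divisor d' of d. -/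
/-!
If `x x̄ + c₁ b = 1`, then `r = y x̄ - c₂ b` satisfies `c₁ r = n x̄ - c₂`, so `r` is an instance of
`r₁`; any two instances satisfy `c₁ (r - r') = n (x̄ - x̄')`, so `r mod n` and `x̄ mod c₁` determine
each other. Since `x̄ mod c₁` determines `x mod c₁`, and then the relation `c₂ x + c₁ y = n` determines
`y mod c₂`, the map is well defined and injective on classes. For the image, write `c₁ ρ + c₂ = n w`:
the divisor conditions say exactly that `w` is prime to `d`, equivalently to `c₁`, and if
`α w + β c₁ = 1` then `(α, α ρ + n β)` is a preimage of `ρ`.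
-/

theorem dvd_iff_dvd_of_mul_eq_mul {M : Type*} [CommMonoidWithZero M] [IsCancelMulZero M]
    {a b c d : M} (ha : a ≠ 0) (hb : b ≠ 0) (h : a * c = b * d) : b ∣ c ↔ a ∣ d := by
  rw [← mul_dvd_mul_iff_left ha, h, mul_comm a b, mul_dvd_mul_iff_left hb]

section CommRing

variable {R : Type*} [CommRing R]

-- The ideal `(y a - c₂ b, n)` contains `c₂ = n a - c₁ (y a - c₂ b)`, hence `a` and `c₁`.
theorem isCoprime_mul_sub_mul {x y a b c₁ c₂ : R} (hx : x * a + c₁ * b = 1) (hy : IsCoprime y c₂) :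
    IsCoprime (y * a - c₂ * b) (c₂ * x + c₁ * y) := by
  obtain ⟨u, v, huv⟩ := hy
  exact ⟨u * x - v * c₁, u * b + v * a, by linear_combination (u * y + v * c₂) * hx + huv⟩

-- The ideal `(α ρ + n β, c₂)` contains `ρ = (α ρ + n β) w - β c₂` and `n = c₂ α + c₁ (α ρ + n β)`.
theorem isCoprime_mul_add_mul {α β w ρ n c₁ c₂ : R} (hw : α * w + β * c₁ = 1)
    (hρ : c₁ * ρ + c₂ = n * w) (hρn : IsCoprime ρ n) : IsCoprime (α * ρ + n * β) c₂ := by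
  obtain ⟨s, t, hst⟩ := hρn
  exact ⟨s * w + t * c₁, t * α - s * β,
    by linear_combination (s * ρ + t * n) * hw + (t * α - s * β) * hρ + hst⟩

end CommRing

theorem ZMod.intCast_eq_intCast_iff_natAbs {n a b : ℤ} :
    (a : ZMod n.natAbs) = b ↔ a ≡ b [ZMOD n] := by
  rw [ZMod.intCast_eq_intCast_iff_dvd_sub, Int.natAbs_dvd, Int.modEq_iff_dvd]

namespace Int

theorem modEq_iff_modEq_of_mul_modEq_one {c x x' a a' : ℤ} (ha : x * a ≡ 1 [ZMOD c])
    (ha' : x' * a' ≡ 1 [ZMOD c]) : a ≡ a' [ZMOD c] ↔ x ≡ x' [ZMOD c] := by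
  simp only [← ZMod.intCast_eq_intCast_iff_natAbs, Int.cast_mul, Int.cast_one] at ha ha' ⊢
  constructor
  · intro h
    rw [← h] at ha'
    exact left_inv_eq_right_inv ha ((mul_comm _ _).trans ha')
  · intro h
    rw [← h] at ha'
    exact left_inv_eq_right_inv ((mul_comm _ _).trans ha) ha'

theorem mul_gcdA_add_mul_gcdB_of_isCoprime {x c : ℤ} (h : IsCoprime x c) :
    x * gcdA x c + c * gcdB x c = 1 := by
  rw [← gcd_eq_gcd_ab, isCoprime_iff_gcd_eq_one.mp h, Nat.cast_one]

theorem mul_gcdA_modEq_one {x c : ℤ} (h : IsCoprime x c) : x * gcdA x c ≡ 1 [ZMOD c] :=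
  modEq_iff_dvd.mpr ⟨gcdB x c, by linear_combination -mul_gcdA_add_mul_gcdB_of_isCoprime h⟩

theorem isCoprime_natCast_iff_forall_dvd (w : ℤ) (d : ℕ) :
    IsCoprime w d ↔ ∀ t : ℕ, t ∣ d → (t : ℤ) ∣ w → t = 1 := by
  refine ⟨fun h t htd htw ↦ ?_, fun h ↦ ?_⟩
  · exact Nat.isUnit_iff.mp (ofNat_isUnit.mp (h.isUnit_of_dvd' htw (natCast_dvd_natCast.mpr htd)))
  · exact isCoprime_iff_gcd_eq_one.mpr
      (h _ (natCast_dvd_natCast.mp (gcd_dvd_right w d)) (gcd_dvd_left w d))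

theorem isCoprime_of_isCoprime_gcd {c₁ c₂ n ρ w : ℤ} (h : c₁ * ρ + c₂ = n * w)
    (hw : IsCoprime w (gcd c₁ c₂)) : IsCoprime w c₁ := by
  obtain ⟨e, f, hef⟩ := hw
  exact ⟨e + f * gcdB c₁ c₂ * n, f * gcdA c₁ c₂ - f * gcdB c₁ c₂ * ρ,
    by linear_combination hef - f * gcdB c₁ c₂ * h - f * gcd_eq_gcd_ab c₁ c₂⟩

theorem ediv_natCast_eq_ediv_mul {n : ℤ} {d d' : ℕ} (hd : 0 < d) (hd'd : d' ∣ d)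
    (hdn : (d : ℤ) ∣ n) : n / d' = n / d * (d / d' : ℕ) := by
  obtain ⟨k, rfl⟩ := hd'd
  obtain ⟨m, rfl⟩ := hdn
  have hd' : d' ≠ 0 := by rintro rfl; simp at hd
  have hk : k ≠ 0 := by rintro rfl; simp at hd
  rw [Nat.mul_div_cancel_left k (Nat.pos_of_ne_zero hd'), Nat.cast_mul, mul_assoc,
    mul_ediv_cancel_left _ (by exact_mod_cast hd'), ← mul_assoc,
    mul_ediv_cancel_left _ (by positivity), mul_comm]

theorem ediv_mul_add_ediv_eq_iff {d c₁ c₂ n ρ w : ℤ} (hd : d ≠ 0) (h₁ : d ∣ c₁) (h₂ : d ∣ c₂)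
    (hn : d ∣ n) : c₁ / d * ρ + c₂ / d = n / d * w ↔ c₁ * ρ + c₂ = n * w := by
  obtain ⟨c₁, rfl⟩ := h₁
  obtain ⟨c₂, rfl⟩ := h₂
  obtain ⟨n, rfl⟩ := hn
  simp only [mul_ediv_cancel_left _ hd]
  exact ⟨fun h ↦ by linear_combination d * h,
    fun h ↦ mul_left_cancel₀ hd (by linear_combination h)⟩

theorem forall_not_dvd_ediv_iff_isCoprime {n w : ℤ} {d : ℕ} (hd : 0 < d) (hdn : (d : ℤ) ∣ n)
    (hn : n ≠ 0) : (∀ d' : ℕ, d' ∣ d → d' < d → ¬ n / d' ∣ n / d * w) ↔ IsCoprime w d := by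
  have hnd : n / d ≠ 0 := fun h ↦ hn (by rw [← Int.mul_ediv_cancel' hdn, h, mul_zero])
  rw [isCoprime_natCast_iff_forall_dvd]
  constructor
  · intro h t htd htw
    by_contra ht1
    have ht : 1 < t := by have := Nat.pos_of_dvd_of_pos htd hd; omega
    apply h (d / t) (Nat.div_dvd_of_dvd htd) (Nat.div_lt_self hd ht)
    rw [ediv_natCast_eq_ediv_mul hd (Nat.div_dvd_of_dvd htd) hdn, Nat.div_div_self htd hd.ne']
    exact mul_dvd_mul_left _ htw
  · intro h d' hd'd hd'lt hdvd
    rw [ediv_natCast_eq_ediv_mul hd hd'd hdn, mul_dvd_mul_iff_left hnd] at hdvd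
    exact hd'lt.ne (Nat.eq_of_dvd_of_div_eq_one hd'd (h _ (Nat.div_dvd_of_dvd hd'd) hdvd))

theorem modEq_of_modEq_of_add_eq {c₁ c₂ n x y x' y' : ℤ} (hc₁ : c₁ ≠ 0)
    (h : c₂ * x + c₁ * y = n) (h' : c₂ * x' + c₁ * y' = n) (hx : x ≡ x' [ZMOD c₁]) :
    y ≡ y' [ZMOD c₂] := by
  obtain ⟨k, hk⟩ := modEq_iff_dvd.mp hx
  exact modEq_iff_dvd.mpr ⟨-k, mul_left_cancel₀ hc₁ (by linear_combination h' - h - c₂ * hk)⟩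

theorem modEq_iff_modEq_of_mul_eq_mul_sub {c₁ c₂ n x x' a a' r r' : ℤ} (hc₁ : c₁ ≠ 0)
    (hn : n ≠ 0) (ha : x * a ≡ 1 [ZMOD c₁]) (ha' : x' * a' ≡ 1 [ZMOD c₁])
    (hr : c₁ * r = n * a - c₂) (hr' : c₁ * r' = n * a' - c₂) :
    r ≡ r' [ZMOD n] ↔ x ≡ x' [ZMOD c₁] := by
  have h : c₁ * (r' - r) = n * (a' - a) := by linear_combination hr' - hr
  rw [modEq_iff_dvd, dvd_iff_dvd_of_mul_eq_mul hc₁ hn h, ← modEq_iff_dvd]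
  exact modEq_iff_modEq_of_mul_modEq_one ha ha'

end Int

-- The `r₁` of the statement for the inverse `x̄ = gcdA x c₁` of `x` modulo `c₁`.
def pairResidue (c₁ c₂ x y : ℤ) : ℤ := y * Int.gcdA x c₁ - c₂ * Int.gcdB x c₁

section pairResidue

variable {c₁ c₂ n x y : ℤ}

theorem mul_pairResidue (hx : IsCoprime x c₁) (h : c₂ * x + c₁ * y = n) :
    c₁ * pairResidue c₁ c₂ x y = n * Int.gcdA x c₁ - c₂ := by
  rw [pairResidue]
  linear_combination Int.gcdA x c₁ * h - c₂ * Int.mul_gcdA_add_mul_gcdB_of_isCoprime hx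

theorem isCoprime_pairResidue (hx : IsCoprime x c₁) (hy : IsCoprime y c₂)
    (h : c₂ * x + c₁ * y = n) : IsCoprime (pairResidue c₁ c₂ x y) n :=
  h ▸ isCoprime_mul_sub_mul (Int.mul_gcdA_add_mul_gcdB_of_isCoprime hx) hy

theorem pairResidue_modEq_iff {x' a r : ℤ} (hc₁ : c₁ ≠ 0) (hn : n ≠ 0) (hx : IsCoprime x c₁)
    (h : c₂ * x + c₁ * y = n) (ha : x' * a ≡ 1 [ZMOD c₁]) (hr : c₁ * r = n * a - c₂) :
    pairResidue c₁ c₂ x y ≡ r [ZMOD n] ↔ x ≡ x' [ZMOD c₁] :=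
  Int.modEq_iff_modEq_of_mul_eq_mul_sub hc₁ hn (Int.mul_gcdA_modEq_one hx) ha
    (mul_pairResidue hx h) hr

end pairResidue

theorem dvd_and_forall_not_dvd_iff_exists_isCoprime {c₁ c₂ d : ℕ} (hc₁ : 0 < c₁)
    (hdef : d = c₁.gcd c₂) {n : ℤ} (hn : n ≠ 0) (hd : (d : ℤ) ∣ n) (ρ : ℤ) :
    ((n / (d : ℤ)) ∣ ((c₁ / d : ℕ) : ℤ) * ρ + ((c₂ / d : ℕ) : ℤ) ∧
      ∀ d' : ℕ, d' ∣ d → d' < d → ¬ ((n / (d' : ℤ)) ∣ ((c₁ / d : ℕ) : ℤ) * ρ + ((c₂ / d : ℕ) : ℤ)))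
    ↔ ∃ w, (c₁ : ℤ) * ρ + c₂ = n * w ∧ IsCoprime w (c₁ : ℤ) := by
  have hd0 : 0 < d := hdef ▸ Nat.gcd_pos_of_pos_left c₂ hc₁
  have hgcd : ((c₁ : ℤ).gcd c₂ : ℤ) = d := by rw [hdef, Int.gcd_natCast_natCast]
  have hscale (w : ℤ) :
      ((c₁ / d : ℕ) : ℤ) * ρ + ((c₂ / d : ℕ) : ℤ) = n / d * w ↔ (c₁ : ℤ) * ρ + c₂ = n * w := by
    push_cast
    exact Int.ediv_mul_add_ediv_eq_iff (by positivity)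
      (hgcd ▸ Int.gcd_dvd_left _ _) (hgcd ▸ Int.gcd_dvd_right _ _) hd
  constructor
  · rintro ⟨⟨w, hw⟩, hmin⟩
    rw [hw, Int.forall_not_dvd_ediv_iff_isCoprime hd0 hd hn] at hmin
    have hw' := (hscale w).mp hw
    exact ⟨w, hw', Int.isCoprime_of_isCoprime_gcd hw' (hgcd ▸ hmin)⟩
  · rintro ⟨w, hw, hwc₁⟩
    rw [← hscale] at hw
    rw [hw, Int.forall_not_dvd_ediv_iff_isCoprime hd0 hd hn]
    exact ⟨dvd_mul_right _ _, hwc₁.of_isCoprime_of_dvd_right (hgcd ▸ Int.gcd_dvd_left _ _)⟩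

theorem stmt_6_general (c₁ c₂ : ℕ) (hc₁ : 0 < c₁) (n : ℤ) (hn : n ≠ 0)
    (d : ℕ) (hdef : d = Nat.gcd c₁ c₂) (hd : (d : ℤ) ∣ n) :
    ∃ f : {p : ℤ × ℤ // IsCoprime p.1 (c₁ : ℤ) ∧ IsCoprime p.2 (c₂ : ℤ) ∧
            (c₂ : ℤ) * p.1 + (c₁ : ℤ) * p.2 = n} → ZMod n.natAbs,
      (∀ p xbar r₁, p.val.1 * xbar ≡ 1 [ZMOD (c₁ : ℤ)] →
          (c₁ : ℤ) * r₁ = n * xbar - (c₂ : ℤ) → f p = (r₁ : ZMod n.natAbs)) ∧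
      (∀ p q, f p = f q ↔
          (p.val.1 ≡ q.val.1 [ZMOD (c₁ : ℤ)] ∧ p.val.2 ≡ q.val.2 [ZMOD (c₂ : ℤ)])) ∧
      Set.range f = {r : ZMod n.natAbs | ∃ ρ : ℤ, (ρ : ZMod n.natAbs) = r ∧
          IsCoprime ρ n ∧
          (n / (d : ℤ)) ∣ ((c₁ / d : ℕ) : ℤ) * ρ + ((c₂ / d : ℕ) : ℤ) ∧
          ∀ d' : ℕ, d' ∣ d → d' < d →
            ¬ ((n / (d' : ℤ)) ∣ ((c₁ / d : ℕ) : ℤ) * ρ + ((c₂ / d : ℕ) : ℤ))} := by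
  have hc₁' : (c₁ : ℤ) ≠ 0 := by positivity
  refine ⟨fun p ↦ pairResidue c₁ c₂ p.1.1 p.1.2, ?_, ?_, ?_⟩
  · rintro ⟨⟨x, y⟩, hx, _, hxy⟩ xbar r₁ hxbar hr₁
    exact ZMod.intCast_eq_intCast_iff_natAbs.mpr
      ((pairResidue_modEq_iff hc₁' hn hx hxy hxbar hr₁).mpr rfl)
  · rintro ⟨⟨x, y⟩, hx, _, hxy⟩ ⟨⟨x', y'⟩, hx', _, hxy'⟩
    rw [ZMod.intCast_eq_intCast_iff_natAbs, pairResidue_modEq_iff hc₁' hn hx hxy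
      (Int.mul_gcdA_modEq_one hx') (mul_pairResidue hx' hxy')]
    exact ⟨fun h ↦ ⟨h, Int.modEq_of_modEq_of_add_eq hc₁' hxy hxy' h⟩, And.left⟩
  · ext r
    simp only [Set.mem_range, Set.mem_ofPred_eq,
      dvd_and_forall_not_dvd_iff_exists_isCoprime hc₁ hdef hn hd]
    constructor
    · rintro ⟨⟨⟨x, y⟩, hx, hy, hxy⟩, rfl⟩
      exact ⟨_, rfl, isCoprime_pairResidue hx hy hxy, Int.gcdA x c₁,
        by linear_combination mul_pairResidue hx hxy,
        ⟨x, Int.gcdB x c₁, by linear_combination Int.mul_gcdA_add_mul_gcdB_of_isCoprime hx⟩⟩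
    · rintro ⟨ρ, rfl, hρn, w, hw, α, β, hαβ⟩
      have hx : IsCoprime α (c₁ : ℤ) := ⟨w, β, by linear_combination hαβ⟩
      have hxy : (c₂ : ℤ) * α + c₁ * (α * ρ + n * β) = n := by
        linear_combination α * hw + n * hαβ
      have hinv : α * w ≡ 1 [ZMOD c₁] := Int.modEq_iff_dvd.mpr ⟨β, by linear_combination -hαβ⟩
      refine ⟨⟨(α, α * ρ + n * β), hx, isCoprime_mul_add_mul hαβ hw hρn, hxy⟩, ?_⟩
      exact ZMod.intCast_eq_intCast_iff_natAbs.mpr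
        ((pairResidue_modEq_iff hc₁' hn hx hxy hinv (by linear_combination hw)).mpr rfl)

theorem stmt_6 (c₁ c₂ : ℕ) (hc₁ : 0 < c₁) (hc₂ : 0 < c₂) (n : ℤ) (hn : n ≠ 0)
    (d : ℕ) (hdef : d = Nat.gcd c₁ c₂) (hd : (d : ℤ) ∣ n) :
    ∃ f : {p : ℤ × ℤ // IsCoprime p.1 (c₁ : ℤ) ∧ IsCoprime p.2 (c₂ : ℤ) ∧
            (c₂ : ℤ) * p.1 + (c₁ : ℤ) * p.2 = n} → ZMod n.natAbs,
      (∀ p xbar r₁, p.val.1 * xbar ≡ 1 [ZMOD (c₁ : ℤ)] →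
          (c₁ : ℤ) * r₁ = n * xbar - (c₂ : ℤ) → f p = (r₁ : ZMod n.natAbs)) ∧
      (∀ p q, f p = f q ↔
          (p.val.1 ≡ q.val.1 [ZMOD (c₁ : ℤ)] ∧ p.val.2 ≡ q.val.2 [ZMOD (c₂ : ℤ)])) ∧
      Set.range f = {r : ZMod n.natAbs | ∃ ρ : ℤ, (ρ : ZMod n.natAbs) = r ∧
          IsCoprime ρ n ∧
          (n / (d : ℤ)) ∣ ((c₁ / d : ℕ) : ℤ) * ρ + ((c₂ / d : ℕ) : ℤ) ∧
          ∀ d' : ℕ, d' ∣ d → d' < d →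
            ¬ ((n / (d' : ℤ)) ∣ ((c₁ / d : ℕ) : ℤ) * ρ + ((c₂ / d : ℕ) : ℤ))} :=
  stmt_6_general c₁ c₂ hc₁ n hn d hdef hd
end

section
/- Let c₁, c₂, n be positive integers with d = gcd(c₁,c₂) dividing n, r an integer coprime to n such that (c₁/d)r + (c₂/d) ≡ 0 (mod n/d), and suppose gcd(c₁/d, n/d) = 1. Fix c₁ and let λ be a positive integer; define c₂/d = -(c₁/d)·r + λ·(n/d). Then the pair (c₁, c₂) satisfies: gcd(c₂/d, n/d) = 1, gcd(c₂/d, c₁/d) = 1, and (c₁r + c₂)/d ≢ 0 (mod n/d') for all proper divisors d' of d, if and only if gcd(λ, c₁) = 1. -/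
/-!
Put `a = c₁/d`, `m = n/d` and `q = c₂/d = -a r + λ m`, so that `(c₁ r + c₂)/d = a r + q = λ m`.
Modulo `m` we have `q ≡ -a r`, a unit, so the first condition always holds; modulo `a` we have
`q ≡ λ m` with `m` a unit, so the second says `gcd(λ, a) = 1`. Since `n/d' = m · (d/d')`, the third
says that no divisor `e = d/d' > 1` of `d` divides `λ`, i.e. `gcd(λ, d) = 1`. Together these say
`gcd(λ, a d) = gcd(λ, c₁) = 1`.
-/

namespace Nat

theorem coprime_iff_forall_proper_dvd_not_div_dvd {l d : ℕ} (hd : 0 < d) :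
    Coprime l d ↔ ∀ d', d' ∣ d → d' < d → ¬ d / d' ∣ l := by
  constructor
  · rintro hcop d' hd' hlt hdiv
    have hone : d / d' = 1 := (hcop.coprime_dvd_left hdiv).eq_one_of_dvd (div_dvd_of_dvd hd')
    have := Nat.div_mul_cancel hd'
    rw [hone, one_mul] at this
    omega
  · intro h
    by_contra hcop
    have hg : 1 < gcd l d := by
      have := gcd_pos_of_pos_right l hd
      unfold Coprime at hcop
      omega
    have hgd : gcd l d ∣ d := gcd_dvd_right l d
    refine h (d / gcd l d) (div_dvd_of_dvd hgd) (div_lt_self hd hg) ?_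
    rw [Nat.div_div_self hgd hd.ne']
    exact gcd_dvd_left l d

theorem div_dvd_mul_div_iff {n d d' l : ℕ} (hdn : d ∣ n) (hd' : d' ∣ d) (hnd : 0 < n / d) :
    n / d' ∣ l * (n / d) ↔ d / d' ∣ l := by
  rw [← div_mul_div hdn hd', mul_comm l, Nat.mul_dvd_mul_iff_left hnd]

end Nat

namespace IsCoprime

variable {R : Type*} [CommRing R] {a r m l : R}

theorem neg_mul_add_mul_left (ham : IsCoprime a m) (hrm : IsCoprime r m) :
    IsCoprime (-a * r + l * m) m := by
  rw [add_mul_right_left_iff, neg_mul, neg_left_iff]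
  exact ham.mul_left hrm

theorem neg_mul_add_mul_left_iff (hma : IsCoprime m a) :
    IsCoprime (-a * r + l * m) a ↔ IsCoprime l a := by
  rw [add_comm, neg_mul, ← mul_neg, add_mul_left_left_iff, mul_left_iff]
  exact and_iff_left hma

end IsCoprime

theorem stmt_7_general (c₁ n d : ℕ) (hn : 0 < n)
    (hdn : d ∣ n) (hdc₁ : d ∣ c₁)
    (r : ℤ) (hr : IsCoprime r (n : ℤ))
    (hcop : Nat.Coprime (c₁ / d) (n / d))
    (lam : ℕ)
    (c₂ : ℤ) (hc₂ : c₂ / (d : ℤ) = -(((c₁ / d : ℕ) : ℤ)) * r + (lam : ℤ) * ((n / d : ℕ) : ℤ))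
    (hc₂d : (d : ℤ) ∣ c₂) :
    (IsCoprime (c₂ / (d : ℤ)) ((n / d : ℕ) : ℤ) ∧
     IsCoprime (c₂ / (d : ℤ)) ((c₁ / d : ℕ) : ℤ) ∧
     (∀ d' : ℕ, d' ∣ d → d' < d →
        ¬ (((n / d' : ℕ) : ℤ) ∣ ((c₁ : ℤ) * r + c₂) / (d : ℤ)))) ↔
    Nat.Coprime lam c₁ := by
  have hd : 0 < d := Nat.pos_of_dvd_of_pos hdn hn
  have hnd : 0 < n / d := Nat.div_pos (Nat.le_of_dvd hn hdn) hd
  have hquot : ((c₁ : ℤ) * r + c₂) / d = lam * (n / d : ℕ) := by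
    obtain ⟨q, rfl⟩ := hc₂d
    rw [Int.mul_ediv_cancel_left q (by omega)] at hc₂
    rw [← Nat.mul_div_cancel' hdc₁, Nat.cast_mul, mul_assoc, ← mul_add,
      Int.mul_ediv_cancel_left _ (by omega), hc₂]
    ring
  have hrm : IsCoprime r ((n / d : ℕ) : ℤ) :=
    hr.of_isCoprime_of_dvd_right (Int.natCast_dvd_natCast.mpr (Nat.div_dvd_of_dvd hdn))
  have hcopZ : IsCoprime ((c₁ / d : ℕ) : ℤ) ((n / d : ℕ) : ℤ) := Nat.isCoprime_iff_coprime.mpr hcop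
  have hfactor : Nat.Coprime lam c₁ ↔ Nat.Coprime lam (c₁ / d) ∧ Nat.Coprime lam d := by
    conv_lhs => rw [← Nat.div_mul_cancel hdc₁]
    exact Nat.coprime_mul_iff_right
  have hproper : (∀ d' : ℕ, d' ∣ d → d' < d → ¬ ((n / d' : ℕ) : ℤ) ∣ lam * (n / d : ℕ)) ↔
      Nat.Coprime lam d := by
    rw [Nat.coprime_iff_forall_proper_dvd_not_div_dvd hd]
    refine forall₂_congr fun d' hd' => ?_
    rw [← Nat.cast_mul, Int.natCast_dvd_natCast, Nat.div_dvd_mul_div_iff hdn hd' hnd]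
  rw [hc₂, hquot, hfactor, hproper, IsCoprime.neg_mul_add_mul_left_iff hcopZ.symm,
    Nat.isCoprime_iff_coprime]
  exact and_iff_right (IsCoprime.neg_mul_add_mul_left hcopZ hrm)

theorem stmt_7 (c₁ n d : ℕ) (hc₁ : 0 < c₁) (hn : 0 < n) (hd : 0 < d)
    (hdn : d ∣ n) (hdc₁ : d ∣ c₁)
    (r : ℤ) (hr : IsCoprime r (n : ℤ))
    (hcop : Nat.Coprime (c₁ / d) (n / d))
    (lam : ℕ) (hlam : 0 < lam)
    (c₂ : ℤ) (hc₂ : c₂ / (d : ℤ) = -(((c₁ / d : ℕ) : ℤ)) * r + (lam : ℤ) * ((n / d : ℕ) : ℤ))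
    (hc₂d : (d : ℤ) ∣ c₂)
    (hcong : ((n / d : ℕ) : ℤ) ∣ ((c₁ / d : ℕ) : ℤ) * r + c₂ / (d : ℤ)) :
    (IsCoprime (c₂ / (d : ℤ)) ((n / d : ℕ) : ℤ) ∧
     IsCoprime (c₂ / (d : ℤ)) ((c₁ / d : ℕ) : ℤ) ∧
     (∀ d' : ℕ, d' ∣ d → d' < d →
        ¬ (((n / d' : ℕ) : ℤ) ∣ ((c₁ : ℤ) * r + c₂) / (d : ℤ)))) ↔
    Nat.Coprime lam c₁ :=
  stmt_7_general c₁ n d hn hdn hdc₁ r hr hcop lam c₂ hc₂ hc₂d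
end

section
/- Define R(n,d) for d | n by R(n,d) = Z(d,1) · Π_{p|n} (1 + 1/p)^{-1}, where Z(d,s) = Σ_{d' = Π p^j : p | d, p ∤ (n/d)} φ(d'·d)/(d'·d)^{1+s} (the sum running over all positive integers d' whose prime factors divide d but not n/d). Then Σ_{d | n} R(n,d) = 1. -/
/-- `Z(d,1) = Σ_{d'} φ(d'·d)/(d'·d)²`, where `d'` runs over positive integers all of whose
prime factors divide `d` but do not divide `n/d`. -/
noncomputable def Zconst (n d : ℕ) : ℝ :=
  ∑' d' : {m : ℕ // 0 < m ∧ ∀ p : ℕ, p.Prime → p ∣ m → (p ∣ d ∧ ¬ p ∣ n / d)},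
    (Nat.totient ((d' : ℕ) * d) : ℝ) / (((d' : ℕ) * d : ℕ) : ℝ) ^ 2

/-- `R(n,d) = Z(d,1) · Π_{p|n} (1 + 1/p)⁻¹`. -/
noncomputable def Rconst (n d : ℕ) : ℝ :=
  Zconst n d * ∏ p ∈ n.primeFactors, (1 + 1 / (p : ℝ))⁻¹

/-! Summing over `d'` gives `Z(d,1) = φ(d)/d² · ∏ (1 - 1/p)⁻¹`, the product running over the
primes with `v_p(d) = v_p(n)`. For `d ∣ n` this is a product over `p ∣ d` of local factors
depending only on `p` and `v_p(d)`, so the sum over the divisors of `n` factors as a product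
over `p ∣ n` of sums over `0 ≤ a ≤ v_p(n)`. Each local sum telescopes to `1 + 1/p`, which
cancels the normalising product in `R(n,d)`. -/

open Finset

theorem Nat.totient_mul_of_primeFactors_subset {m d : ℕ} (h : m.primeFactors ⊆ d.primeFactors) :
    Nat.totient (m * d) = m * Nat.totient d := by
  rcases eq_or_ne m 0 with rfl | hm
  · simp
  rcases eq_or_ne d 0 with rfl | hd
  · simp
  have hpf : (m * d).primeFactors = d.primeFactors := by
    rw [Nat.primeFactors_mul hm hd, union_eq_right.mpr h]
  have hmd := Nat.totient_mul_prod_primeFactors (m * d)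
  rw [hpf] at hmd
  refine Nat.eq_of_mul_eq_mul_right (m := ∏ p ∈ d.primeFactors, p)
    (prod_pos fun p hp => (Nat.prime_of_mem_primeFactors hp).pos) ?_
  rw [hmd, mul_assoc, mul_assoc, Nat.totient_mul_prod_primeFactors]

theorem Nat.totient_div_sq_eq_factorization_prod {d : ℕ} (hd : d ≠ 0) :
    (Nat.totient d : ℝ) / (d : ℝ) ^ 2 =
      d.factorization.prod fun p a => (Nat.totient (p ^ a) : ℝ) / ((p ^ a : ℕ) : ℝ) ^ 2 :=
  Nat.multiplicative_factorization (fun d => (Nat.totient d : ℝ) / (d : ℝ) ^ 2)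
    (fun x y hxy => by rw [Nat.totient_mul hxy]; push_cast; ring) (by simp) hd

theorem Nat.totient_prime_pow_div_sq {p : ℕ} (hp : p.Prime) {a : ℕ} (ha : a ≠ 0) :
    (Nat.totient (p ^ a) : ℝ) / ((p ^ a : ℕ) : ℝ) ^ 2 = (1 - (p : ℝ)⁻¹) * (p : ℝ)⁻¹ ^ a := by
  have hp0 : (p : ℝ) ≠ 0 := by exact_mod_cast hp.ne_zero
  obtain ⟨b, rfl⟩ := Nat.exists_eq_add_one_of_ne_zero ha
  rw [Nat.totient_prime_pow_succ hp, inv_pow]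
  push_cast [Nat.cast_sub hp.one_le]
  field_simp
  ring

theorem Nat.sum_range_totient_prime_pow_div_sq {p : ℕ} (hp : p.Prime) {k : ℕ} (hk : 1 ≤ k) :
    ∑ a ∈ range k, (Nat.totient (p ^ a) : ℝ) / ((p ^ a : ℕ) : ℝ) ^ 2 =
      1 + (p : ℝ)⁻¹ - (p : ℝ)⁻¹ ^ k := by
  induction k, hk using Nat.le_induction with
  | base => simp
  | succ k hk ih =>
    rw [sum_range_succ, ih, Nat.totient_prime_pow_div_sq hp (by omega)]
    ring

theorem Nat.Prime.dvd_div_iff_factorization_lt {p n d : ℕ} (hp : p.Prime) (hn : n ≠ 0)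
    (hd : d ∣ n) : p ∣ n / d ↔ d.factorization p < n.factorization p := by
  rw [hp.dvd_iff_one_le_factorization (Nat.div_ne_zero_iff_of_dvd hd |>.mpr ⟨hn, ?_⟩),
    Nat.factorization_div hd, Finsupp.tsub_apply]
  · omega
  · rintro rfl
    exact hn (Nat.eq_zero_of_zero_dvd hd)

theorem Nat.hasSum_inv_factoredNumbers (s : Finset ℕ) :
    HasSum (fun m : Nat.factoredNumbers s => ((m : ℕ) : ℝ)⁻¹)
      (∏ p ∈ s with p.Prime, (1 - (p : ℝ)⁻¹)⁻¹) :=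
  (EulerProduct.summable_and_hasSum_factoredNumbers_prod_filter_prime_geometric
    (f := invMonoidHom.comp (Nat.castRingHom ℝ : ℕ →* ℝ))
    (fun hp => by simpa [abs_of_pos] using inv_lt_one_of_one_lt₀ (by exact_mod_cast hp.one_lt)) s).2

theorem Nat.sum_divisors_factorization_prod {R : Type*} [CommSemiring R] (h : ℕ → ℕ → R)
    {n : ℕ} (hn : n ≠ 0) (h_zero : ∀ p ∈ n.primeFactors, h p 0 = 1) :
    ∑ d ∈ n.divisors, d.factorization.prod h =
      ∏ p ∈ n.primeFactors, ∑ a ∈ range (n.factorization p + 1), h p a := by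
  let F : ArithmeticFunction R := ⟨fun d => if d = 0 then 0 else d.factorization.prod h, rfl⟩
  have hF : F.IsMultiplicative := by
    refine ArithmeticFunction.IsMultiplicative.iff_ne_zero.mpr ⟨by simp [F], ?_⟩
    intro m k hm hk hmk
    simp only [F, ArithmeticFunction.coe_mk, mul_ne_zero hm hk, hm, hk, if_false,
      Nat.factorization_mul_of_coprime hmk]
    exact Finsupp.prod_add_index_of_disjoint hmk.disjoint_primeFactors h
  have hsum (m : ℕ) : ∑ d ∈ m.divisors, d.factorization.prod h =
      (ArithmeticFunction.zeta * F : ArithmeticFunction R) m := by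
    rw [ArithmeticFunction.coe_zeta_mul_apply]
    exact sum_congr rfl fun d hd => by simp [F, Nat.ne_of_gt (Nat.pos_of_mem_divisors hd)]
  rw [hsum, (ArithmeticFunction.isMultiplicative_zeta.natCast.mul hF).multiplicative_factorization
    _ hn, Nat.prod_factorization_eq_prod_primeFactors]
  refine prod_congr rfl fun p hp => ?_
  have hp' := Nat.prime_of_mem_primeFactors hp
  rw [← hsum, Nat.sum_divisors_prime_pow hp']
  refine sum_congr rfl fun a _ => ?_
  rw [hp'.factorization_pow, Finsupp.prod_single_index (h_zero p hp)]

theorem Zconst_eq (n : ℕ) {d : ℕ} (hd : d ≠ 0) :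
    Zconst n d = (Nat.totient d : ℝ) / (d : ℝ) ^ 2 *
      ∏ p ∈ d.primeFactors with ¬ p ∣ n / d, (1 - (p : ℝ)⁻¹)⁻¹ := by
  set s := {p ∈ d.primeFactors | ¬ p ∣ n / d}
  have hindex (m : ℕ) : (0 < m ∧ ∀ p : ℕ, p.Prime → p ∣ m → (p ∣ d ∧ ¬ p ∣ n / d)) ↔
      m ∈ Nat.factoredNumbers s := by
    refine ⟨fun ⟨_, h⟩ => Nat.mem_factoredNumbers'.mpr fun p hp hpm => ?_, fun h => ⟨?_, ?_⟩⟩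
    · exact mem_filter.mpr ⟨Nat.mem_primeFactors.mpr ⟨hp, (h p hp hpm).1, hd⟩, (h p hp hpm).2⟩
    · exact Nat.pos_of_ne_zero (Nat.ne_zero_of_mem_factoredNumbers h)
    · intro p hp hpm
      obtain ⟨hpd, hpnd⟩ := mem_filter.mp (Nat.mem_factoredNumbers'.mp h p hp hpm)
      exact ⟨Nat.dvd_of_mem_primeFactors hpd, hpnd⟩
  have hterm (m : Nat.factoredNumbers s) :
      (Nat.totient ((m : ℕ) * d) : ℝ) / (((m : ℕ) * d : ℕ) : ℝ) ^ 2 =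
        ((m : ℕ) : ℝ)⁻¹ * ((Nat.totient d : ℝ) / (d : ℝ) ^ 2) := by
    have hsub := (Nat.primeFactors_subset_of_mem_factoredNumbers m.2).trans (filter_subset _ _)
    have hm : (m : ℕ) ≠ 0 := Nat.ne_zero_of_mem_factoredNumbers m.2
    rw [Nat.totient_mul_of_primeFactors_subset hsub]
    push_cast
    field_simp
  have hs : {p ∈ s | p.Prime} = s :=
    filter_true_of_mem fun p hp => Nat.prime_of_mem_primeFactors (mem_filter.mp hp).1
  calc Zconst n d
      = ∑' m : Nat.factoredNumbers s,
          (Nat.totient ((m : ℕ) * d) : ℝ) / (((m : ℕ) * d : ℕ) : ℝ) ^ 2 :=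
        (Equiv.subtypeEquivRight hindex).tsum_eq (fun m : Nat.factoredNumbers s =>
          (Nat.totient ((m : ℕ) * d) : ℝ) / (((m : ℕ) * d : ℕ) : ℝ) ^ 2)
    _ = _ := by
      rw [tsum_congr hterm, ((Nat.hasSum_inv_factoredNumbers s).mul_right _).tsum_eq, hs, mul_comm]

noncomputable def zconstLocal (n p a : ℕ) : ℝ :=
  (Nat.totient (p ^ a) : ℝ) / ((p ^ a : ℕ) : ℝ) ^ 2 *
    if n.factorization p ≤ a then (1 - (p : ℝ)⁻¹)⁻¹ else 1

theorem Zconst_eq_factorization_prod {n d : ℕ} (hn : n ≠ 0) (hd : d ∣ n) :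
    Zconst n d = d.factorization.prod (zconstLocal n) := by
  have hd0 : d ≠ 0 := ne_zero_of_dvd_ne_zero hn hd
  unfold zconstLocal
  rw [Finsupp.prod_mul, Zconst_eq n hd0, Nat.totient_div_sq_eq_factorization_prod hd0, prod_filter,
    Nat.prod_factorization_eq_prod_primeFactors]
  congr 1
  refine prod_congr rfl fun p hp => ?_
  simp only [(Nat.prime_of_mem_primeFactors hp).dvd_div_iff_factorization_lt hn hd, not_lt]

theorem zconstLocal_zero {n p : ℕ} (h : 0 < n.factorization p) : zconstLocal n p 0 = 1 := by
  simp [zconstLocal, h.ne']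

theorem sum_range_zconstLocal {n p : ℕ} (h : 0 < n.factorization p) :
    ∑ a ∈ range (n.factorization p + 1), zconstLocal n p a = 1 + (p : ℝ)⁻¹ := by
  have hp : p.Prime := Nat.prime_of_mem_primeFactors (Finsupp.mem_support_iff.mpr h.ne')
  have hr : (1 : ℝ) - (p : ℝ)⁻¹ ≠ 0 :=
    sub_ne_zero.mpr (inv_lt_one_of_one_lt₀ (by exact_mod_cast hp.one_lt)).ne'
  unfold zconstLocal
  rw [sum_range_succ, if_pos le_rfl, Nat.totient_prime_pow_div_sq hp h.ne',
    mul_right_comm, mul_inv_cancel₀ hr, one_mul,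
    sum_congr rfl fun a ha => by rw [if_neg (by simpa using ha), mul_one],
    Nat.sum_range_totient_prime_pow_div_sq hp h]
  ring

theorem stmt_13 (n : ℕ) (hn : 0 < n) :
    ∑ d ∈ n.divisors, Rconst n d = 1 := by
  have hval (p : ℕ) (hp : p ∈ n.primeFactors) : 0 < n.factorization p :=
    (Nat.prime_of_mem_primeFactors hp).factorization_pos_of_dvd hn.ne'
      (Nat.dvd_of_mem_primeFactors hp)
  simp only [Rconst, ← sum_mul]
  rw [sum_congr rfl fun d hd => Zconst_eq_factorization_prod hn.ne' (Nat.dvd_of_mem_divisors hd),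
    Nat.sum_divisors_factorization_prod _ hn.ne' fun p hp => zconstLocal_zero (hval p hp),
    prod_congr rfl fun p hp => sum_range_zconstLocal (hval p hp), ← prod_mul_distrib]
  exact prod_eq_one fun p _ => by rw [one_div, mul_inv_cancel₀ (by positivity)]
end
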